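/- arXiv:2401.15566 — 2 statements merged into one kernel-verified Lean document; each statement's English description precedes it below -/
import Mathlib

section
/- Let X be an m×n real matrix of rank r, I ⊆ [m] a set of row indices and J ⊆ [n] a set of column indices. Let C = X[:,J] be the column submatrix, R = X[I,:] the row submatrix, and U = X[I,J] the intersection submatrix. If rank(U) = rank(X), then X = C U⁺ R, where U⁺ denotes the Moore–Penrose pseudoinverse of U. -/
/-!
Write `C = X P`, `R = Q X` and `U = Q X P` with selection matrices `P`, `Q`. Since
`rank U ≤ rank C ≤ rank X`, the hypothesis forces `rank C = rank X`, so the columns of `C`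
span the column space of `X` and `X = C W`; likewise `rank U = rank C` makes the rows of `U`
span the row space of `C`, so `C = Z U`. Then
`C U⁺ R = C U⁺ Q C W = Z U U⁺ U W = Z U W = C W = X`.
-/

open Matrix

/-- `Up` is the Moore–Penrose pseudoinverse of `U` (real matrices),
characterized by the four Penrose conditions. -/
def IsMoorePenroseInv {ι κ : Type*} [Fintype ι] [Fintype κ]
    (U : Matrix ι κ ℝ) (Up : Matrix κ ι ℝ) : Prop :=
  U * Up * U = U ∧ Up * U * Up = Up ∧ (U * Up)ᵀ = U * Up ∧ (Up * U)ᵀ = Up * U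

namespace Matrix

variable {i j l m n : Type*} [Fintype i] [Fintype j] [Fintype m] [Fintype n]

theorem exists_eq_mul_of_range_mulVecLin_le {R : Type*} [CommSemiring R]
    (A : Matrix l m R) (B : Matrix l n R)
    (h : LinearMap.range B.mulVecLin ≤ LinearMap.range A.mulVecLin) :
    ∃ W : Matrix m n R, B = A * W := by
  classical
  have hcol (k : n) : ∃ w, A *ᵥ w = B.col k := h ⟨Pi.single k 1, mulVec_single_one B k⟩
  choose w hw using hcol
  refine ⟨(of w)ᵀ, ext fun a k => ?_⟩
  rw [← col_apply B k a, ← hw k]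
  rfl

variable {K : Type*} [Field K]

theorem range_mulVecLin_mul_eq_of_rank_eq (A : Matrix l m K) (B : Matrix m n K)
    (h : (A * B).rank = A.rank) :
    LinearMap.range (A * B).mulVecLin = LinearMap.range A.mulVecLin :=
  Submodule.eq_of_le_of_finrank_le
    (mulVecLin_mul A B ▸ LinearMap.range_comp_le_range _ _) h.ge

theorem exists_eq_mul_mul_of_rank_mul_eq_left (A : Matrix l m K) (B : Matrix m n K)
    (h : (A * B).rank = A.rank) : ∃ W : Matrix n m K, A = A * B * W :=
  exists_eq_mul_of_range_mulVecLin_le (A * B) A (range_mulVecLin_mul_eq_of_rank_eq A B h).ge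

theorem exists_eq_mul_mul_of_rank_mul_eq_right [Fintype l] (A : Matrix m n K) (B : Matrix l m K)
    (h : (B * A).rank = A.rank) : ∃ W : Matrix m l K, A = W * (B * A) := by
  have hT : (Aᵀ * Bᵀ).rank = Aᵀ.rank := by
    rw [← transpose_mul, rank_transpose, rank_transpose, h]
  obtain ⟨W, hW⟩ := exists_eq_mul_mul_of_rank_mul_eq_left Aᵀ Bᵀ hT
  exact ⟨Wᵀ, by simpa [transpose_mul, Matrix.mul_assoc] using congrArg transpose hW⟩

theorem eq_mul_mul_mul_of_rank_mul_mul_eq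
    (A : Matrix m n K) (Q : Matrix i m K) (P : Matrix n j K) (G : Matrix j i K)
    (hG : Q * A * P * G * (Q * A * P) = Q * A * P) (h : (Q * A * P).rank = A.rank) :
    A = A * P * G * (Q * A) := by
  have hAP : (A * P).rank = A.rank :=
    le_antisymm (rank_mul_le_left A P)
      (h ▸ Matrix.mul_assoc Q A P ▸ rank_mul_le_right Q (A * P))
  obtain ⟨W, hW⟩ := exists_eq_mul_mul_of_rank_mul_eq_left A P hAP
  obtain ⟨Z, hZ⟩ := exists_eq_mul_mul_of_rank_mul_eq_right (A * P) Q
    (by rw [← Matrix.mul_assoc, h, hAP])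
  have hZ' : Z * (Q * A * P) = A * P := by rw [Matrix.mul_assoc Q A P, ← hZ]
  calc A = Z * (Q * A * P) * W := by rw [hZ', ← hW]
    _ = Z * (Q * A * P * G * (Q * A * P)) * W := by rw [hG]
    _ = Z * (Q * A * P) * G * (Q * A * P * W) := by simp only [Matrix.mul_assoc]
    _ = A * P * G * (Q * A) := by
        rw [hZ', Matrix.mul_assoc (Q * A), Matrix.mul_assoc Q, ← Matrix.mul_assoc A, ← hW]

end Matrix

theorem cur_decomposition_general {m n : ℕ} (X : Matrix (Fin m) (Fin n) ℝ)
    (I : Finset (Fin m)) (J : Finset (Fin n))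
    (C : Matrix (Fin m) J ℝ) (R : Matrix I (Fin n) ℝ) (U : Matrix I J ℝ)
    (hC : C = X.submatrix id (fun j : J => (j : Fin n)))
    (hR : R = X.submatrix (fun i : I => (i : Fin m)) id)
    (hU : U = X.submatrix (fun i : I => (i : Fin m)) (fun j : J => (j : Fin n)))
    (Up : Matrix J I ℝ) (hUp : IsMoorePenroseInv U Up)
    (hrank : U.rank = X.rank) :
    X = C * Up * R := by
  set P : Matrix (Fin n) J ℝ := (1 : Matrix (Fin n) (Fin n) ℝ).submatrix (Equiv.refl _) (↑)
  set Q : Matrix I (Fin m) ℝ := (1 : Matrix (Fin m) (Fin m) ℝ).submatrix (↑) (Equiv.refl _)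
  have hCP : C = X * P := by rw [hC, mul_submatrix_one]; rfl
  have hRQ : R = Q * X := by rw [hR, one_submatrix_mul]; rfl
  have hUQP : U = Q * X * P := by
    rw [hU, Matrix.mul_assoc, mul_submatrix_one, one_submatrix_mul, submatrix_submatrix]; rfl
  rw [hCP, hRQ]
  rw [hUQP] at hUp hrank
  exact eq_mul_mul_mul_of_rank_mul_mul_eq X Q P Up hUp.1 hrank

/-- CUR decomposition: if `rank U = rank X`, then `X = C U⁺ R`. -/
theorem cur_decomposition {m n r : ℕ} (X : Matrix (Fin m) (Fin n) ℝ)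
    (I : Finset (Fin m)) (J : Finset (Fin n))
    (hX : X.rank = r)
    (C : Matrix (Fin m) J ℝ) (R : Matrix I (Fin n) ℝ) (U : Matrix I J ℝ)
    (hC : C = X.submatrix id (fun j : J => (j : Fin n)))
    (hR : R = X.submatrix (fun i : I => (i : Fin m)) id)
    (hU : U = X.submatrix (fun i : I => (i : Fin m)) (fun j : J => (j : Fin n)))
    (Up : Matrix J I ℝ) (hUp : IsMoorePenroseInv U Up)
    (hrank : U.rank = X.rank) :
    X = C * Up * R :=
  cur_decomposition_general X I J C R U hC hR hU Up hUp hrank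
end

section
/- Let X be an m×n matrix of rank r, and suppose C = X[:,J] satisfies rank(C) = r and R = X[I,:] satisfies rank(R) = r. Then U = X[I,J] satisfies rank(U) = r. -/
/-!
Since `R` consists of rows of `X` and has the same rank, its rows span the whole row space of `X`.
Restricting to the columns `J` is a linear map on row vectors, so it sends this common row space to
the row space of `U` (from `R`) and to that of `C` (from `X`); hence `rank U = rank C = r`.
-/

namespace Matrix

variable {K m m' n n' : Type*} [Field K]

theorem span_row_submatrix_eq_of_rank_eq [Finite m] [Finite m'] [Fintype n]
    (A : Matrix m n K) (f : m' → m) (h : (A.submatrix f id).rank = A.rank) :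
    Submodule.span K (Set.range (A.submatrix f id).row) = Submodule.span K (Set.range A.row) :=
  Submodule.eq_of_le_of_finrank_le (Submodule.span_mono (Set.range_comp_subset_range f A))
    (by rw [← rank_eq_finrank_span_row, ← rank_eq_finrank_span_row, h])

theorem span_row_submatrix_col (A : Matrix m n K) (g : n' → n) :
    Submodule.span K (Set.range (A.submatrix id g).row) =
      (Submodule.span K (Set.range A.row)).map (LinearMap.funLeft K K g) := by
  rw [Submodule.map_span, ← Set.range_comp]
  rfl

theorem rank_submatrix_col_eq_of_span_row_eq [Finite m] [Finite m'] [Fintype n']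
    {A : Matrix m n K} {B : Matrix m' n K}
    (h : Submodule.span K (Set.range A.row) = Submodule.span K (Set.range B.row)) (g : n' → n) :
    (A.submatrix id g).rank = (B.submatrix id g).rank := by
  rw [rank_eq_finrank_span_row, rank_eq_finrank_span_row, span_row_submatrix_col,
    span_row_submatrix_col, h]

end Matrix

open Matrix

/-- If the row and column submatrices `R` and `C` have full rank `r = rank X`,
then the intersection submatrix `U` also has rank `r`. -/
theorem rank_intersection_full {m n r : ℕ} (X : Matrix (Fin m) (Fin n) ℝ)
    (I : Finset (Fin m)) (J : Finset (Fin n))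
    (hX : X.rank = r)
    (C : Matrix (Fin m) J ℝ) (R : Matrix I (Fin n) ℝ) (U : Matrix I J ℝ)
    (hC : C = X.submatrix id (fun j : J => (j : Fin n)))
    (hR : R = X.submatrix (fun i : I => (i : Fin m)) id)
    (hU : U = X.submatrix (fun i : I => (i : Fin m)) (fun j : J => (j : Fin n)))
    (hCrank : C.rank = r) (hRrank : R.rank = r) :
    U.rank = r := by
  subst hC hR hU
  have hspan := X.span_row_submatrix_eq_of_rank_eq _ (hRrank.trans hX.symm)
  exact (rank_submatrix_col_eq_of_span_row_eq hspan _).trans hCrank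
end
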